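/- Let d ≥ 3 be an integer, m an integer with 1 ≤ m ≤ d/2, 0 < κ < 1/2, R > 1, and c = 1/1000. If x = (x', x'', x_d) ∈ Λ and ξ = (ξ', ξ'') ∈ Ω (with Λ, Ω as in the context), then the real number R(x'·ξ' + x''·ξ'' + x_d|ξ'|² + x_d|ξ''|²) lies in 2πℤ + (-1/100, 1/100), i.e., there exists k ∈ ℤ with |R(x'·ξ' + x''·ξ'' + x_d|ξ|²) - 2πk| < 1/100. -/

import Mathlib

open MeasureTheory Metric Real
open scoped ENNReal

/-- The vector in `ℝ^n` with integer coordinates `ℓ`. -/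
noncomputable def intVec {n : ℕ} (ℓ : Fin n → ℤ) : EuclideanSpace ℝ (Fin n) :=
  (EuclideanSpace.equiv (Fin n) ℝ).symm fun i => (ℓ i : ℝ)

/-- The first `m` coordinates `x'` of a vector `x ∈ ℝ^n`. -/
noncomputable def headV {n : ℕ} (m : ℕ) (h : m ≤ n) (x : EuclideanSpace ℝ (Fin n)) :
    EuclideanSpace ℝ (Fin m) :=
  (EuclideanSpace.equiv (Fin m) ℝ).symm fun i => x (Fin.castLE h i)

/-- The middle coordinates `x'' = (x_{m+1}, …, x_{d-1})` of a vector `x ∈ ℝ^d`. -/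
noncomputable def midV (d m : ℕ) (x : EuclideanSpace ℝ (Fin d)) :
    EuclideanSpace ℝ (Fin (d - m - 1)) :=
  (EuclideanSpace.equiv (Fin (d - m - 1)) ℝ).symm fun i =>
    x ⟨m + i, by have := i.isLt; omega⟩

/-- The coordinates `ξ'' = (ξ_{m+1}, …, ξ_{d-1})` of a vector `ξ ∈ ℝ^{d-1}`. -/
noncomputable def tailP (d m : ℕ) (ξ : EuclideanSpace ℝ (Fin (d - 1))) :
    EuclideanSpace ℝ (Fin (d - m - 1)) :=
  (EuclideanSpace.equiv (Fin (d - m - 1)) ℝ).symm fun i =>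
    ξ ⟨m + i, by have := i.isLt; omega⟩


section Aux

lemma euclid_norm_sq {n : ℕ} (y : EuclideanSpace ℝ (Fin n)) :
    ‖y‖ ^ 2 = ∑ i, y i ^ 2 := by
  rw [← real_inner_self_eq_norm_sq]
  rw [PiLp.inner_apply]
  simp [sq]

lemma coord_abs_le_norm {n : ℕ} (y : EuclideanSpace ℝ (Fin n)) (i : Fin n) :
    |y i| ≤ ‖y‖ := by
  have h2 : y i ^ 2 ≤ ‖y‖ ^ 2 := by
    rw [euclid_norm_sq]
    exact Finset.single_le_sum (f := fun j => y j ^ 2) (fun j _ => sq_nonneg _)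
      (Finset.mem_univ i)
  have := Real.sqrt_le_sqrt h2
  simpa [Real.sqrt_sq_eq_abs, Real.sqrt_sq (norm_nonneg y)] using this

lemma sub_norm_le {n k : ℕ} (x : EuclideanSpace ℝ (Fin n))
    (f : Fin k → Fin n) (hf : Function.Injective f)
    (y : EuclideanSpace ℝ (Fin k)) (hy : ∀ i, y i = x (f i)) :
    ‖y‖ ≤ ‖x‖ := by
  have h2 : ‖y‖ ^ 2 ≤ ‖x‖ ^ 2 := by
    rw [euclid_norm_sq, euclid_norm_sq]
    calc ∑ i, y i ^ 2 = ∑ i, x (f i) ^ 2 := by simp [hy]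
      _ = ∑ j ∈ Finset.univ.image f, x j ^ 2 := by
          rw [Finset.sum_image (fun a _ b _ h => hf h)]
      _ ≤ ∑ j, x j ^ 2 := Finset.sum_le_sum_of_subset_of_nonneg
          (Finset.subset_univ _) (fun j _ _ => sq_nonneg _)
  have := Real.sqrt_le_sqrt h2
  simpa [Real.sqrt_sq (norm_nonneg y), Real.sqrt_sq (norm_nonneg x)] using this

lemma sum_split (d m : ℕ) (hm : m + 1 ≤ d) (f : Fin (d - 1) → ℝ) :
    ∑ j, f j = (∑ i : Fin m, f (Fin.castLE (by omega) i)) +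
      ∑ i : Fin (d - m - 1), f ⟨m + i, by omega⟩ := by
  have hmd : m + (d - m - 1) = d - 1 := by omega
  rw [← Equiv.sum_comp (finSumFinEquiv.trans (finCongr hmd)) f, Fintype.sum_sum_type]
  refine congrArg₂ (· + ·) (Finset.sum_congr rfl fun i _ => ?_)
    (Finset.sum_congr rfl fun i _ => ?_) <;>
  exact congrArg f (by ext; simp [finSumFinEquiv])

lemma intVec_inner {n : ℕ} (L N : Fin n → ℤ) :
    (inner ℝ (intVec L) (intVec N) : ℝ) = ((∑ i, L i * N i : ℤ) : ℝ) := by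
  rw [PiLp.inner_apply]
  push_cast
  refine Finset.sum_congr rfl fun i _ => ?_
  simp [intVec, mul_comm]

end Aux

/-- The set `Ω = [B^m(0, cR^{-1/2}) × (2πR^{-κ}ℤ^{d-m-1} + B^{d-m-1}(0, cR^{-1}))]
∩ B^{d-1}(0,1)`, with `c = 1/1000`. -/
noncomputable def OmegaP (d m : ℕ) (h : m ≤ d - 1) (κ R : ℝ) :
    Set (EuclideanSpace ℝ (Fin (d - 1))) :=
  {ξ | ξ ∈ ball (0 : EuclideanSpace ℝ (Fin (d - 1))) 1 ∧
    ‖headV m h ξ‖ < (1 / 1000) * R ^ (-(1 : ℝ) / 2) ∧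
    ∃ n : Fin (d - m - 1) → ℤ,
      ‖tailP d m ξ - (2 * π * R ^ (-κ)) • intVec n‖ < (1 / 1000) * R ^ (-(1 : ℝ))}

/-- The set `Λ = [B^m(0, cR^{-1/2}) × (R^{κ-1}ℤ^{d-m-1} + B^{d-m-1}(0, cR^{-1}))
× ((1/2π)R^{2κ-1}ℤ + (-cR^{-1}, cR^{-1}))] ∩ B^d(0,1)`, with `c = 1/1000`. -/
noncomputable def LambdaP (d m : ℕ) (hm : m ≤ d) (hd : 0 < d) (κ R : ℝ) :
    Set (EuclideanSpace ℝ (Fin d)) :=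
  {x | x ∈ ball (0 : EuclideanSpace ℝ (Fin d)) 1 ∧
    ‖headV m hm x‖ < (1 / 1000) * R ^ (-(1 : ℝ) / 2) ∧
    (∃ ℓ : Fin (d - m - 1) → ℤ,
      ‖midV d m x - R ^ (κ - 1) • intVec ℓ‖ < (1 / 1000) * R ^ (-(1 : ℝ))) ∧
    ∃ k : ℤ,
      |x ⟨d - 1, by omega⟩ - (1 / (2 * π)) * R ^ (2 * κ - 1) * k| <
        (1 / 1000) * R ^ (-(1 : ℝ))}

/-- `c_α(μ) = sup_{x, r>0} μ(B(x,r)) / r^α`, valued in `ℝ≥0∞`. -/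
noncomputable def cAlpha {d : ℕ} (α : ℝ) (μ : Measure (EuclideanSpace ℝ (Fin d))) : ℝ≥0∞ :=
  ⨆ (x : EuclideanSpace ℝ (Fin d)) (r : ℝ) (_ : 0 < r),
    μ (ball x r) / ENNReal.ofReal (r ^ α)

set_option maxHeartbeats 2000000 in
theorem stmt15 (d m : ℕ) (hd : 3 ≤ d) (hm1 : 1 ≤ m) (hm2 : 2 * m ≤ d)
    (κ : ℝ) (hκ1 : 0 < κ) (hκ2 : κ < 1 / 2) (R : ℝ) (hR : 1 < R)
    (x : EuclideanSpace ℝ (Fin d)) (ξ : EuclideanSpace ℝ (Fin (d - 1)))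
    (hx : x ∈ LambdaP d m (by omega) (by omega) κ R)
    (hξ : ξ ∈ OmegaP d m (by omega) κ R) :
    ∃ k : ℤ,
      |R * ((inner ℝ (headV m (by omega : m ≤ d) x) (headV m (by omega : m ≤ d - 1) ξ) : ℝ) +
        (inner ℝ (midV d m x) (tailP d m ξ) : ℝ) +
        x ⟨d - 1, by omega⟩ * ‖ξ‖ ^ 2) - 2 * π * k| < 1 / 100 := by
  classical
  obtain ⟨hxball, hxa, ⟨L, hL⟩, ⟨kz, hk⟩⟩ := hx
  obtain ⟨hξball, hξb, ⟨N, hN⟩⟩ := hξ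
  have hR0 : (0:ℝ) < R := lt_trans one_pos hR
  have hRne : R ≠ 0 := ne_of_gt hR0
  have hπ : (0:ℝ) < π := Real.pi_pos
  have hπne : π ≠ 0 := ne_of_gt hπ
  have hrinv : R ^ (-(1:ℝ)) = R⁻¹ := by
    rw [Real.rpow_neg hR0.le, Real.rpow_one]
  rw [hrinv] at hL hN hk
  have hRinv0 : (0:ℝ) < R⁻¹ := by positivity
  have hRinv1 : R⁻¹ ≤ 1 := by
    rw [inv_le_one_iff₀]; right; exact hR.le
  set s : ℝ := R ^ (-(1:ℝ)/2) with hs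
  have hs0 : 0 ≤ s := Real.rpow_nonneg hR0.le _
  have hss : s * s = R⁻¹ := by
    rw [hs, ← Real.rpow_add hR0]
    norm_num [hrinv]
  set α : ℝ := R ^ (κ - 1) with hα
  set β : ℝ := 2 * π * R ^ (-κ) with hβ
  set γ : ℝ := 1 / (2 * π) * R ^ (2 * κ - 1) with hγ
  have hα0 : (0:ℝ) < α := Real.rpow_pos_of_pos hR0 _
  have hβ0 : (0:ℝ) < β := by
    have := Real.rpow_pos_of_pos hR0 (-κ); positivity
  have hαβ : R * (α * β) = 2 * π := by
    have h1 : α * R ^ (-κ) = R⁻¹ := by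
      rw [hα, ← Real.rpow_add hR0]
      have : κ - 1 + -κ = -(1:ℝ) := by ring
      rw [this, hrinv]
    have h2 : α * β = 2 * π * (α * R ^ (-κ)) := by rw [hβ]; ring
    rw [h2, h1]
    field_simp
  have hγβ : R * (γ * β ^ 2) = 2 * π := by
    have h1 : R ^ (2*κ-1) * (R ^ (-κ) * R ^ (-κ)) = R⁻¹ := by
      rw [← Real.rpow_add hR0, ← Real.rpow_add hR0]
      have : 2*κ - 1 + (-κ + -κ) = -(1:ℝ) := by ring
      rw [this, hrinv]
    have h2 : γ * β ^ 2 = 2 * π * (R ^ (2*κ-1) * (R ^ (-κ) * R ^ (-κ))) := by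
      rw [hγ, hβ]; field_simp
    rw [h2, h1]
    field_simp
  -- names
  set a := headV m (by omega : m ≤ d) x with ha
  set b := headV m (by omega : m ≤ d - 1) ξ with hb
  set u := midV d m x with hu
  set v := tailP d m ξ with hv
  set t := x ⟨d - 1, by omega⟩ with htdef
  set Lv := intVec L with hLv
  set Nv := intVec N with hNv
  set e₁ := u - α • Lv with he₁
  set e₂ := v - β • Nv with he₂
  set e₃ := t - γ * (kz : ℝ) with he₃
  have hae : ‖a‖ < 1/1000 * s := hxa
  have hbe : ‖b‖ < 1/1000 * s := hξb
  have he1 : ‖e₁‖ < 1/1000 * R⁻¹ := hL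
  have he2 : ‖e₂‖ < 1/1000 * R⁻¹ := hN
  have he3 : |e₃| < 1/1000 * R⁻¹ := hk
  have hr1000 : 1/1000 * R⁻¹ ≤ 1/1000 := by nlinarith [hRinv0, hRinv1]
  have hxnorm : ‖x‖ < 1 := by
    simpa using mem_ball_zero_iff.mp hxball
  have hξnorm : ‖ξ‖ < 1 := by
    simpa using mem_ball_zero_iff.mp hξball
  have ht1 : |t| < 1 := lt_of_le_of_lt (coord_abs_le_norm x _) hxnorm
  have hunorm : ‖u‖ < 1 := by
    refine lt_of_le_of_lt ?_ hxnorm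
    refine sub_norm_le x (fun i => ⟨m + i.val, by have := i.isLt; omega⟩) ?_ u
      (fun i => rfl)
    intro i j hij
    have := congrArg Fin.val hij
    simp only at this
    exact Fin.ext (by omega)
  have hvnorm : ‖v‖ < 1 := by
    refine lt_of_le_of_lt ?_ hξnorm
    refine sub_norm_le ξ (fun i => ⟨m + i.val, by have := i.isLt; omega⟩) ?_ v
      (fun i => rfl)
    intro i j hij
    have := congrArg Fin.val hij
    simp only at this
    exact Fin.ext (by omega)
  clear_value s α β γ a b u v t Lv Nv e₁ e₂ e₃
  clear hxball hξball
  -- bounds on lattice parts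
  have hαL : α * ‖Lv‖ ≤ 1001/1000 := by
    have h1 : α • Lv = u - e₁ := by rw [he₁]; abel
    have h2 : ‖α • Lv‖ ≤ ‖u‖ + ‖e₁‖ := by rw [h1]; exact norm_sub_le _ _
    rw [norm_smul, Real.norm_eq_abs, abs_of_pos hα0] at h2
    linarith only [he1, hr1000, hunorm, h2]
  have hβN : β * ‖Nv‖ ≤ 1001/1000 := by
    have h1 : β • Nv = v - e₂ := by rw [he₂]; abel
    have h2 : ‖β • Nv‖ ≤ ‖v‖ + ‖e₂‖ := by rw [h1]; exact norm_sub_le _ _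
    rw [norm_smul, Real.norm_eq_abs, abs_of_pos hβ0] at h2
    linarith only [he2, hr1000, hvnorm, h2]
  have hRe1 : R * ‖e₁‖ ≤ 1/1000 := by
    have h : R * (1/1000 * R⁻¹) = 1/1000 := by field_simp
    calc R * ‖e₁‖ ≤ R * (1/1000 * R⁻¹) := by
          exact mul_le_mul_of_nonneg_left he1.le hR0.le
      _ = 1/1000 := h
  have hRe2 : R * ‖e₂‖ ≤ 1/1000 := by
    have h : R * (1/1000 * R⁻¹) = 1/1000 := by field_simp
    calc R * ‖e₂‖ ≤ R * (1/1000 * R⁻¹) := by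
          exact mul_le_mul_of_nonneg_left he2.le hR0.le
      _ = 1/1000 := h
  have hRe3 : R * |e₃| ≤ 1/1000 := by
    have h : R * (1/1000 * R⁻¹) = 1/1000 := by field_simp
    calc R * |e₃| ≤ R * (1/1000 * R⁻¹) := by
          exact mul_le_mul_of_nonneg_left he3.le hR0.le
      _ = 1/1000 := h
  have he2' : ‖e₂‖ ≤ 1/1000 := le_trans he2.le hr1000
  -- inner products
  set IL : ℝ := (inner ℝ Lv Nv : ℝ) with hIL
  set IN : ℝ := ‖Nv‖ ^ 2 with hIN
  set A : ℝ := (inner ℝ a b : ℝ) with hA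
  set X2 : ℝ := (inner ℝ Lv e₂ : ℝ) with hX2
  set X3 : ℝ := (inner ℝ Nv e₁ : ℝ) with hX3
  set X4 : ℝ := (inner ℝ e₁ e₂ : ℝ) with hX4
  set X7 : ℝ := (inner ℝ Nv e₂ : ℝ) with hX7
  clear_value IL IN A X2 X3 X4 X7
  have hu' : u = α • Lv + e₁ := by rw [he₁]; abel
  have hv' : v = β • Nv + e₂ := by rw [he₂]; abel
  have ht' : t = γ * (kz : ℝ) + e₃ := by rw [he₃]; ring
  have hinner : (inner ℝ u v : ℝ) = α * β * IL + α * X2 + β * X3 + X4 := by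
    rw [hu', hv']
    simp only [inner_add_left, inner_add_right, real_inner_smul_left,
      real_inner_smul_right]
    rw [← real_inner_comm e₁ Nv, ← hIL, ← hX2, ← hX3, ← hX4]
    ring
  have hnormv : ‖v‖ ^ 2 = β ^ 2 * IN + 2 * β * X7 + ‖e₂‖ ^ 2 := by
    rw [hv', norm_add_sq_real, norm_smul, Real.norm_eq_abs, abs_of_pos hβ0, real_inner_smul_left]
    rw [hIN, hX7]
    ring
  have hsplit : ‖ξ‖ ^ 2 = ‖b‖ ^ 2 + ‖v‖ ^ 2 := by
    rw [euclid_norm_sq ξ, sum_split d m (by omega) (fun j => ξ j ^ 2),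
      hb, hv, euclid_norm_sq, euclid_norm_sq]
    rfl
  refine ⟨(∑ i, L i * N i) + kz * (∑ i, N i * N i), ?_⟩
  have hKcast : (((∑ i, L i * N i) + kz * (∑ i, N i * N i) : ℤ) : ℝ)
      = IL + (kz : ℝ) * IN := by
    push_cast
    rw [hIL, hIN, hLv, hNv, intVec_inner L N, ← real_inner_self_eq_norm_sq,
      intVec_inner N N]
    push_cast
    ring
  have hmain : R * (A + (inner ℝ u v : ℝ) + t * ‖ξ‖ ^ 2)
      - 2 * π * (((∑ i, L i * N i) + kz * (∑ i, N i * N i) : ℤ) : ℝ)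
      = R * A + R * (α * X2) + R * (β * X3) + R * X4 + R * (t * ‖b‖ ^ 2)
        + R * (e₃ * (β ^ 2 * IN)) + R * (t * (2 * β * X7))
        + R * (t * ‖e₂‖ ^ 2) := by
    rw [hKcast, hinner, hsplit, hnormv]
    linear_combination IL * hαβ + (kz : ℝ) * IN * hγβ
      + (R * (β ^ 2 * IN)) * ht'
  rw [hmain, abs_lt]
  -- individual bounds
  have hA1 : |R * A| ≤ 1/1000000 := by
    have h0 : |A| ≤ ‖a‖ * ‖b‖ := by rw [hA]; exact abs_real_inner_le_norm a b
    have h1 : ‖a‖ * ‖b‖ ≤ (1/1000 * s) * (1/1000 * s) :=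
      mul_le_mul hae.le hbe.le (norm_nonneg _) (by positivity)
    have h2 : R * ((1/1000 * s) * (1/1000 * s)) = 1/1000000 := by
      rw [show (1/1000 * s) * (1/1000 * s) = 1/1000000 * (s * s) by ring, hss]
      field_simp
    calc |R * A| = R * |A| := by rw [abs_mul, abs_of_pos hR0]
      _ ≤ R * ((1/1000 * s) * (1/1000 * s)) :=
          mul_le_mul_of_nonneg_left (h0.trans h1) hR0.le
      _ = 1/1000000 := h2
  have hB2 : |R * (α * X2)| ≤ 1002/1000000 := by
    have h0 : |X2| ≤ ‖Lv‖ * ‖e₂‖ := by rw [hX2]; exact abs_real_inner_le_norm Lv e₂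
    calc |R * (α * X2)| = R * (α * |X2|) := by
          rw [abs_mul, abs_mul, abs_of_pos hR0, abs_of_pos hα0]
      _ ≤ R * (α * (‖Lv‖ * ‖e₂‖)) := by
          apply mul_le_mul_of_nonneg_left _ hR0.le
          exact mul_le_mul_of_nonneg_left h0 hα0.le
      _ = (α * ‖Lv‖) * (R * ‖e₂‖) := by ring
      _ ≤ (1001/1000) * (1/1000) := by
          apply mul_le_mul hαL hRe2 (by positivity) (by norm_num)
      _ ≤ 1002/1000000 := by norm_num
  have hB3 : |R * (β * X3)| ≤ 1002/1000000 := by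
    have h0 : |X3| ≤ ‖Nv‖ * ‖e₁‖ := by rw [hX3]; exact abs_real_inner_le_norm Nv e₁
    calc |R * (β * X3)| = R * (β * |X3|) := by
          rw [abs_mul, abs_mul, abs_of_pos hR0, abs_of_pos hβ0]
      _ ≤ R * (β * (‖Nv‖ * ‖e₁‖)) := by
          apply mul_le_mul_of_nonneg_left _ hR0.le
          exact mul_le_mul_of_nonneg_left h0 hβ0.le
      _ = (β * ‖Nv‖) * (R * ‖e₁‖) := by ring
      _ ≤ (1001/1000) * (1/1000) := by
          apply mul_le_mul hβN hRe1 (by positivity) (by norm_num)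
      _ ≤ 1002/1000000 := by norm_num
  have hB4 : |R * X4| ≤ 1/1000000 := by
    have h0 : |X4| ≤ ‖e₁‖ * ‖e₂‖ := by rw [hX4]; exact abs_real_inner_le_norm e₁ e₂
    calc |R * X4| = R * |X4| := by rw [abs_mul, abs_of_pos hR0]
      _ ≤ R * (‖e₁‖ * ‖e₂‖) := mul_le_mul_of_nonneg_left h0 hR0.le
      _ = (R * ‖e₁‖) * ‖e₂‖ := by ring
      _ ≤ (1/1000) * (1/1000) := by
          apply mul_le_mul hRe1 he2' (norm_nonneg _) (by norm_num)
      _ = 1/1000000 := by norm_num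
  have hB5 : |R * (t * ‖b‖ ^ 2)| ≤ 1/1000000 := by
    have h2 : R * ((1/1000 * s) * (1/1000 * s)) = 1/1000000 := by
      rw [show (1/1000 * s) * (1/1000 * s) = 1/1000000 * (s * s) by ring, hss]
      field_simp
    have h1 : ‖b‖ ^ 2 ≤ (1/1000 * s) * (1/1000 * s) := by
      rw [sq]
      exact mul_le_mul hbe.le hbe.le (norm_nonneg _) (by positivity)
    calc |R * (t * ‖b‖ ^ 2)| = R * (|t| * ‖b‖ ^ 2) := by
          rw [abs_mul, abs_mul, abs_of_pos hR0, abs_of_nonneg (sq_nonneg ‖b‖)]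
      _ ≤ R * (1 * ((1/1000 * s) * (1/1000 * s))) := by
          apply mul_le_mul_of_nonneg_left _ hR0.le
          exact mul_le_mul ht1.le h1 (sq_nonneg _) (by norm_num)
      _ = R * ((1/1000 * s) * (1/1000 * s)) := by ring
      _ = 1/1000000 := h2
  have hB6 : |R * (e₃ * (β ^ 2 * IN))| ≤ 1003/1000000 := by
    have h0 : β ^ 2 * IN = (β * ‖Nv‖) ^ 2 := by rw [hIN]; ring
    have h1 : (β * ‖Nv‖) ^ 2 ≤ (1001/1000) ^ 2 := by
      apply pow_le_pow_left₀ (by positivity) hβN 2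
    calc |R * (e₃ * (β ^ 2 * IN))| = (R * |e₃|) * (β ^ 2 * IN) := by
          rw [abs_mul, abs_mul, abs_of_pos hR0,
            abs_of_nonneg (by rw [h0]; positivity : (0:ℝ) ≤ β ^ 2 * IN)]
          ring
      _ ≤ (1/1000) * ((1001/1000) ^ 2) := by
          apply mul_le_mul hRe3 (by rw [h0]; exact h1) (by rw [h0]; positivity)
            (by norm_num)
      _ ≤ 1003/1000000 := by norm_num
  have hB7 : |R * (t * (2 * β * X7))| ≤ 2003/1000000 := by
    have h0 : |X7| ≤ ‖Nv‖ * ‖e₂‖ := by rw [hX7]; exact abs_real_inner_le_norm Nv e₂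
    calc |R * (t * (2 * β * X7))| = R * (|t| * (2 * β * |X7|)) := by
          rw [abs_mul, abs_mul, abs_mul, abs_mul, abs_of_pos hR0, abs_of_pos hβ0]
          norm_num
      _ ≤ R * (1 * (2 * β * (‖Nv‖ * ‖e₂‖))) := by
          apply mul_le_mul_of_nonneg_left _ hR0.le
          apply mul_le_mul ht1.le _ (by positivity) (by norm_num)
          exact mul_le_mul_of_nonneg_left h0 (by positivity)
      _ = 2 * ((β * ‖Nv‖) * (R * ‖e₂‖)) := by ring
      _ ≤ 2 * ((1001/1000) * (1/1000)) := by
          apply mul_le_mul_of_nonneg_left _ (by norm_num)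
          apply mul_le_mul hβN hRe2 (by positivity) (by norm_num)
      _ ≤ 2003/1000000 := by norm_num
  have hB8 : |R * (t * ‖e₂‖ ^ 2)| ≤ 1/1000000 := by
    calc |R * (t * ‖e₂‖ ^ 2)| = R * (|t| * ‖e₂‖ ^ 2) := by
          rw [abs_mul, abs_mul, abs_of_pos hR0, abs_of_nonneg (sq_nonneg ‖e₂‖)]
      _ ≤ R * (1 * (‖e₂‖ * ‖e₂‖)) := by
          apply mul_le_mul_of_nonneg_left _ hR0.le
          rw [sq]
          exact mul_le_mul ht1.le le_rfl (by positivity) (by norm_num)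
      _ = (R * ‖e₂‖) * ‖e₂‖ := by ring
      _ ≤ (1/1000) * (1/1000) := mul_le_mul hRe2 he2' (norm_nonneg _) (by norm_num)
      _ ≤ 1/1000000 := by norm_num
  obtain ⟨c1,d1⟩ := abs_le.mp hA1
  obtain ⟨c2,d2⟩ := abs_le.mp hB2
  obtain ⟨c3,d3⟩ := abs_le.mp hB3
  obtain ⟨c4,d4⟩ := abs_le.mp hB4
  obtain ⟨c5,d5⟩ := abs_le.mp hB5
  obtain ⟨c6,d6⟩ := abs_le.mp hB6
  obtain ⟨c7,d7⟩ := abs_le.mp hB7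
  obtain ⟨c8,d8⟩ := abs_le.mp hB8
  constructor
  · linarith
  · linarith
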